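/- arXiv:2111.01473 — 6 statements merged into one kernel-verified Lean document; each statement's English description precedes it below -/
import Mathlib

section
/- Fix n ∈ ℕ and integers r₁,…,r_k ≥ 1 with r₁+⋯+r_k = n. Let G(r₁,…,r_k) be the undirected graph with loops whose adjacency matrix A has the anti-triangular block structure: the (i,j) block (of size rᵢ×r_j) is the all-ones matrix if i + j ≤ k + 1, and the zero matrix otherwise. Then the eigenvector centrality c of G(r₁,…,r_k), written in blocks c₁^(1),…,c₁^(r₁), c₂^(1),…, c_k^(r_k), satisfies: (a) within each block all components are equal, c_i^(1) = c_i^(2) = ⋯ = c_i^(r_i) for every i = 1,…,k; and (b) the block values are strictly decreasing, c₁^(1) > c₂^(1) > ⋯ > c_k^(1). -/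
open Matrix BigOperators

/-- The spectral radius of a real matrix: the supremum of the absolute values of its
complex eigenvalues. -/
noncomputable def specRad {m : Type*} [Fintype m] [DecidableEq m]
    (A : Matrix m m ℝ) : ℝ :=
  sSup {r : ℝ | ∃ μ ∈ spectrum ℂ (A.map (algebraMap ℝ ℂ)), r = ‖μ‖}

/-- The adjacency matrix of the undirected graph with loops `G(r₁,…,r_k)`:
nodes are indexed by pairs `⟨i, a⟩` with `i : Fin k` (the block) and `a : Fin (r i)`;
the `(i,j)` block is all-ones iff (1-based) `i + j ≤ k + 1`, i.e. (0-based) `i + j < k`. -/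
noncomputable def blockGraphAdj {k : ℕ} (r : Fin k → ℕ) :
    Matrix ((i : Fin k) × Fin (r i)) ((i : Fin k) × Fin (r i)) ℝ :=
  fun p q => if (p.1 : ℕ) + (q.1 : ℕ) < k then 1 else 0

/-!
Everything is read off the eigenvalue equation `ρ c_p = ∑_q A_pq c_q` for a positive vector `c`:
`ρ > 0` as soon as some entry of `A ≥ 0` is positive, two nodes with the same row of `A` get the
same value, and a node whose row is dominated entrywise, strictly somewhere, gets a strictly
smaller value. In `G(r₁,…,r_k)` the row of a node depends only on its block, and the row of
block `i` dominates that of every later block, strictly in the (1-based) block `k + 1 - i`.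
-/

namespace Matrix

variable {m R : Type*} [Fintype m] [Ring R] {A : Matrix m m R} {c : m → R} {ρ : R}

theorem mulVec_eq_smul_apply (heig : A *ᵥ c = ρ • c) (i : m) : A i ⬝ᵥ c = ρ * c i :=
  congrFun heig i

variable [LinearOrder R] [IsStrictOrderedRing R]

theorem dotProduct_lt_dotProduct_of_pos_right {u v w : m → R} (huv : u < v) (hw : ∀ i, 0 < w i) :
    u ⬝ᵥ w < v ⬝ᵥ w := by
  obtain ⟨hle, i, hlt⟩ := Pi.lt_def.mp huv
  exact Finset.sum_lt_sum (fun j _ => mul_le_mul_of_nonneg_right (hle j) (hw j).le)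
    ⟨i, Finset.mem_univ i, mul_lt_mul_of_pos_right hlt (hw i)⟩

theorem pos_of_mulVec_eq_smul (hA : ∀ i j, 0 ≤ A i j) (hc : ∀ i, 0 < c i)
    (heig : A *ᵥ c = ρ • c) {i j : m} (hij : 0 < A i j) : 0 < ρ := by
  have hsum : 0 < ρ * c i := by
    rw [← mulVec_eq_smul_apply heig]
    calc 0 < A i j * c j := mul_pos hij (hc j)
      _ ≤ A i ⬝ᵥ c := Finset.single_le_sum (fun q _ => mul_nonneg (hA i q) (hc q).le)
          (Finset.mem_univ j)
  exact pos_of_mul_pos_left hsum (hc i).le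

theorem eq_of_row_eq_of_mulVec_eq_smul (heig : A *ᵥ c = ρ • c) (hρ : ρ ≠ 0) {i j : m}
    (hrow : A i = A j) : c i = c j :=
  mul_left_cancel₀ hρ <| by
    rw [← mulVec_eq_smul_apply heig, ← mulVec_eq_smul_apply heig, hrow]

theorem lt_of_row_lt_of_mulVec_eq_smul (hc : ∀ i, 0 < c i) (heig : A *ᵥ c = ρ • c)
    (hρ : 0 < ρ) {i j : m} (hrow : A i < A j) : c i < c j :=
  lt_of_mul_lt_mul_left (by
    rw [← mulVec_eq_smul_apply heig, ← mulVec_eq_smul_apply heig]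
    exact dotProduct_lt_dotProduct_of_pos_right hrow hc) hρ.le

end Matrix

section blockGraphAdj

variable {k : ℕ} (r : Fin k → ℕ)

theorem blockGraphAdj_nonneg (p q : (i : Fin k) × Fin (r i)) : 0 ≤ blockGraphAdj r p q := by
  unfold blockGraphAdj
  split_ifs <;> norm_num

theorem blockGraphAdj_row_eq (i : Fin k) (a b : Fin (r i)) :
    blockGraphAdj r ⟨i, a⟩ = blockGraphAdj r ⟨i, b⟩ :=
  rfl

theorem blockGraphAdj_pos_first_block (p : (i : Fin k) × Fin (r i)) (b : Fin (r ⟨0, p.1.pos⟩)) :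
    0 < blockGraphAdj r p ⟨⟨0, p.1.pos⟩, b⟩ := by
  simp [blockGraphAdj, p.1.2]

theorem blockGraphAdj_row_lt (hr : ∀ i, 1 ≤ r i) {i j : Fin k} (hij : i < j)
    (a : Fin (r i)) (b : Fin (r j)) :
    blockGraphAdj r ⟨j, b⟩ < blockGraphAdj r ⟨i, a⟩ := by
  have hij : (i : ℕ) < j := hij
  refine Pi.lt_def.mpr ⟨fun q => ?_, ⟨⟨k - 1 - i, by omega⟩, ⟨0, hr _⟩⟩, ?_⟩
  · show (if (j : ℕ) + q.1 < k then (1 : ℝ) else 0) ≤ if (i : ℕ) + q.1 < k then 1 else 0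
    split_ifs <;> first | omega | norm_num
  · have hi : (i : ℕ) + (k - 1 - i) < k := by omega
    have hj : ¬ (j : ℕ) + (k - 1 - i) < k := by omega
    simp [blockGraphAdj, hi, hj]

end blockGraphAdj

theorem eigenvector_ranking_blockGraph_general {k : ℕ} (r : Fin k → ℕ)
    (hr : ∀ i, 1 ≤ r i)
    (c : ((i : Fin k) × Fin (r i)) → ℝ)
    (hpos : ∀ p, 0 < c p)
    (heig : (blockGraphAdj r).mulVec c = specRad (blockGraphAdj r) • c) :
    (∀ (i : Fin k) (a b : Fin (r i)), c ⟨i, a⟩ = c ⟨i, b⟩) ∧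
    (∀ i j : Fin k, i < j →
      c ⟨j, ⟨0, hr j⟩⟩ < c ⟨i, ⟨0, hr i⟩⟩) := by
  have hρ : ∀ i : Fin k, 0 < specRad (blockGraphAdj r) := fun i =>
    pos_of_mulVec_eq_smul (blockGraphAdj_nonneg r) hpos heig
      (blockGraphAdj_pos_first_block r ⟨i, ⟨0, hr i⟩⟩ ⟨0, hr _⟩)
  refine ⟨fun i a b => ?_, fun i j hij => ?_⟩
  · exact eq_of_row_eq_of_mulVec_eq_smul heig (hρ i).ne' (blockGraphAdj_row_eq r i a b)
  · exact lt_of_row_lt_of_mulVec_eq_smul hpos heig (hρ i) (blockGraphAdj_row_lt r hr hij _ _)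

/-- The eigenvector centrality of `G(r₁,…,r_k)` is constant on each block and its common
block values are strictly decreasing. -/
theorem eigenvector_ranking_blockGraph {n k : ℕ} (r : Fin k → ℕ)
    (hr : ∀ i, 1 ≤ r i) (hsum : ∑ i, r i = n)
    (c : ((i : Fin k) × Fin (r i)) → ℝ)
    (hpos : ∀ p, 0 < c p) (hnorm : ∑ p, c p = 1)
    (heig : (blockGraphAdj r).mulVec c = specRad (blockGraphAdj r) • c) :
    (∀ (i : Fin k) (a b : Fin (r i)), c ⟨i, a⟩ = c ⟨i, b⟩) ∧
    (∀ i j : Fin k, i < j →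
      c ⟨j, ⟨0, hr j⟩⟩ < c ⟨i, ⟨0, hr i⟩⟩) :=
  eigenvector_ranking_blockGraph_general r hr c hpos heig
end

section
/- Fix q ∈ (0,1), n ∈ ℕ, and integers r₁,…,r_k ≥ 1 with r₁+⋯+r_k = n. Let G(r₁,…,r_k) be the undirected graph with loops whose adjacency matrix A has (i,j) block equal to the all-ones rᵢ×r_j matrix when i + j ≤ k + 1 and zero otherwise. Then the PageRank centrality c of G(r₁,…,r_k) with damping factor q satisfies: within each block all components are equal, and the common block values strictly decrease: c₁^(1) = ⋯ = c₁^(r₁) > c₂^(1) = ⋯ = c₂^(r₂) > ⋯ > c_k^(1) = ⋯ = c_k^(r_k). -/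
open Matrix BigOperators

/-- The transpose of the row-normalized matrix obtained from `A`:
`B i j = A j i / (∑ t, A j t)`. -/
noncomputable def googleB {m : Type*} [Fintype m] (A : Matrix m m ℝ) : Matrix m m ℝ :=
  fun i j => A j i / ∑ t, A j t

/-! A solution of `q B c = c - d e` is `c = q B c + d e`, so two nodes whose rows of `B` agree
get the same value, and a node whose row of `B` dominates another's gets a strictly larger value
once `c > 0` and `q > 0`. In `G(r₁,…,r_k)` the in-neighbourhood of a node depends only on its
block and shrinks strictly from block `i` to any later block `j`: the nodes of block `k - 1 - i`
(0-based) see block `i` but not block `j`. -/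

section AffineFixedPoint

variable {m : Type*} [Fintype m] {M : Matrix m m ℝ} {c : m → ℝ} {q d : ℝ}
  (hc : ∀ p, q * ∑ s, M p s * c s = c p - d)
include hc

theorem affine_fixedPoint_eq_of_row_eq {p p' : m} (h : M p = M p') : c p = c p' := by
  have hp := hc p
  rw [h, hc p'] at hp
  linarith

theorem affine_fixedPoint_lt_of_row_lt (hq : 0 < q) (hpos : ∀ s, 0 < c s) {p p' : m}
    (h : M p' < M p) : c p' < c p := by
  obtain ⟨hle, s, hlt⟩ := Pi.lt_def.1 h
  have hsum : ∑ s, M p' s * c s < ∑ s, M p s * c s :=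
    Finset.sum_lt_sum (fun t _ => mul_le_mul_of_nonneg_right (hle t) (hpos t).le)
      ⟨s, Finset.mem_univ _, mul_lt_mul_of_pos_right hlt (hpos s)⟩
  have := mul_lt_mul_of_pos_left hsum hq
  linarith [hc p, hc p']

end AffineFixedPoint

section GoogleMatrix

variable {m : Type*} [Fintype m] {A : Matrix m m ℝ}

theorem googleB_row_eq {p p' : m} (h : Aᵀ p = Aᵀ p') : googleB A p = googleB A p' := by
  funext s
  simp only [googleB, ← transpose_apply A, h]

theorem googleB_row_lt (hrow : ∀ s, 0 < ∑ t, A s t) {p p' : m} (h : Aᵀ p' < Aᵀ p) :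
    googleB A p' < googleB A p := by
  obtain ⟨hle, s, hlt⟩ := Pi.lt_def.1 h
  exact Pi.lt_def.2 ⟨fun t => div_le_div_of_nonneg_right (hle t) (hrow t).le,
    s, div_lt_div_of_pos_right hlt (hrow s)⟩

end GoogleMatrix

section BlockGraph

variable {k : ℕ} {r : Fin k → ℕ}

theorem blockGraphAdj_rowSum_pos (hr : ∀ i, 1 ≤ r i) (s : (i : Fin k) × Fin (r i)) :
    0 < ∑ t, blockGraphAdj r s t := by
  have hk : 0 < k := Fin.pos s.1
  refine Finset.sum_pos' (fun t _ => by unfold blockGraphAdj; positivity)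
    ⟨⟨⟨0, hk⟩, ⟨0, hr _⟩⟩, Finset.mem_univ _, ?_⟩
  simp [blockGraphAdj, s.1.2]

theorem blockGraphAdj_col_eq {p p' : (i : Fin k) × Fin (r i)} (h : p.1 = p'.1) :
    (blockGraphAdj r)ᵀ p = (blockGraphAdj r)ᵀ p' := by
  funext s
  simp [blockGraphAdj, h]

theorem blockGraphAdj_col_lt (hr : ∀ i, 1 ≤ r i) {p p' : (i : Fin k) × Fin (r i)}
    (h : p.1 < p'.1) : (blockGraphAdj r)ᵀ p' < (blockGraphAdj r)ᵀ p := by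
  have hlt : (p.1 : ℕ) < p'.1 := h
  refine Pi.lt_def.2 ⟨fun s => ?_, ⟨⟨k - 1 - p.1, by omega⟩, ⟨0, hr _⟩⟩, ?_⟩
  · simp only [transpose_apply, blockGraphAdj]
    split_ifs with hp' hp
    exacts [le_rfl, absurd (by omega) hp, zero_le_one, le_rfl]
  · simp only [transpose_apply, blockGraphAdj]
    rw [if_neg (by omega), if_pos (by omega)]
    exact one_pos

end BlockGraph

theorem pageRank_ranking_blockGraph_general {n k : ℕ} (q : ℝ) (hq : q ∈ Set.Ioo (0:ℝ) 1)
    (r : Fin k → ℕ) (hr : ∀ i, 1 ≤ r i)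
    (c : ((i : Fin k) × Fin (r i)) → ℝ)
    (hpos : ∀ p, 0 < c p)
    (hPR : ∀ p, q * ∑ s, googleB (blockGraphAdj r) p s * c s = c p - (1 - q) / n) :
    (∀ (i : Fin k) (a b : Fin (r i)), c ⟨i, a⟩ = c ⟨i, b⟩) ∧
    (∀ i j : Fin k, i < j →
      c ⟨j, ⟨0, hr j⟩⟩ < c ⟨i, ⟨0, hr i⟩⟩) :=
  ⟨fun _ _ _ => affine_fixedPoint_eq_of_row_eq hPR (googleB_row_eq (blockGraphAdj_col_eq rfl)),
    fun _ _ hij => affine_fixedPoint_lt_of_row_lt hPR hq.1 hpos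
      (googleB_row_lt (blockGraphAdj_rowSum_pos hr) (blockGraphAdj_col_lt hr hij))⟩

/-- The PageRank centrality of `G(r₁,…,r_k)` with damping factor `q` is constant on each
block and its common block values are strictly decreasing. -/
theorem pageRank_ranking_blockGraph {n k : ℕ} (q : ℝ) (hq : q ∈ Set.Ioo (0:ℝ) 1)
    (r : Fin k → ℕ) (hr : ∀ i, 1 ≤ r i) (hsum : ∑ i, r i = n)
    (c : ((i : Fin k) × Fin (r i)) → ℝ)
    (hpos : ∀ p, 0 < c p) (hnorm : ∑ p, c p = 1)
    (hPR : ∀ p, q * ∑ s, googleB (blockGraphAdj r) p s * c s = c p - (1 - q) / n) :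
    (∀ (i : Fin k) (a b : Fin (r i)), c ⟨i, a⟩ = c ⟨i, b⟩) ∧
    (∀ i j : Fin k, i < j →
      c ⟨j, ⟨0, hr j⟩⟩ < c ⟨i, ⟨0, hr i⟩⟩) :=
  pageRank_ranking_blockGraph_general q hq r hr c hpos hPR
end

section
/- Fix q ∈ (0,1), n ∈ ℕ, and integers r₁,…,r_k ≥ 1 with k ≥ 3 and r₁+⋯+r_k = n. Let G⃗(r₁,…,r_k) be the directed graph without loops whose adjacency matrix A⃗ has block structure: the diagonal (i,i) block is 1_{rᵢ} − I_{rᵢ} (all ones off-diagonal, zero diagonal); block (1,j) and block (j,1) are all-ones for all j; block (i,j) for 2 ≤ i, j with i > j is all-ones; block (i,j) for 2 ≤ i < j ≤ k (with (i,j) ≠ (1,j)) is zero, except block (1,j) is all-ones. Concretely, A⃗ equals the matrix whose (i,j) block (i ≠ j) is all-ones if i = 1, j = 1, or i > j, and zero if 2 ≤ i < j. Then the PageRank centrality c of G⃗(r₁,…,r_k) with damping factor q satisfies c₁^(1) = ⋯ = c₁^(r₁) > c₂^(1) = ⋯ = c₂^(r₂) > ⋯ > c_k^(1) = ⋯ =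 c_k^(r_k). -/
open Matrix BigOperators

/-- The adjacency matrix of the directed graph without loops `G⃗(r₁,…,r_k)`:
the diagonal `(i,i)` block is all-ones minus the identity; off-diagonal block `(i,j)` is
all-ones if `i` is the first block, `j` is the first block, or `i > j`, and zero when
`2 ≤ i < j` (1-based); here blocks are 0-based. -/
noncomputable def dirBlockGraphAdj {k : ℕ} (r : Fin k → ℕ) :
    Matrix ((i : Fin k) × Fin (r i)) ((i : Fin k) × Fin (r i)) ℝ :=
  fun p q =>
    if p.1 = q.1 then (if p = q then 0 else 1)
    else if (p.1 : ℕ) = 0 ∨ (q.1 : ℕ) = 0 ∨ (q.1 : ℕ) < (p.1 : ℕ) then 1 else 0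

/-!
Subtracting the PageRank equations of two nodes `p, p'` gives
`c p - c p' = q ∑ₛ (A s p - A s p') c s / deg s`, so the ranking is decided by how the
in-neighbourhoods of `p` and `p'` compare.

Two nodes of one block, and a node of block 0 together with one of block 1 (blocks 0-based),
are adjacent to each other and have the same other in-neighbours; then the identity becomes
`c p (1 + q / deg p) = c p' (1 + q / deg p')`. Equal out-degrees thus force equal centralities,
and block 0, whose out-degree exceeds that of block 1 as soon as a block 2 exists, beats block 1.

For `1 ≤ i < j`, every in-neighbour of block `j` is one of block `i`, and block `j` points to
block `i` but not conversely, so every term of the sum is nonnegative and one is positive.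
-/

open scoped Finset

noncomputable def outDegree {m : Type*} [Fintype m] (A : Matrix m m ℝ) (s : m) : ℝ :=
  ∑ t, A s t

section PageRank

variable {m : Type*} [Fintype m] {A : Matrix m m ℝ} {q α : ℝ} {c : m → ℝ}

theorem le_outDegree (hA : ∀ s t, 0 ≤ A s t) (s t : m) : A s t ≤ outDegree A s :=
  Finset.single_le_sum (fun t _ => hA s t) (Finset.mem_univ t)

theorem outDegree_nonneg (hA : ∀ s t, 0 ≤ A s t) (s : m) : 0 ≤ outDegree A s :=
  Finset.sum_nonneg fun t _ => hA s t

theorem pageRank_sub_eq (hPR : ∀ p, q * ∑ s, googleB A p s * c s = c p - α) (p p' : m) :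
    c p - c p' = q * ∑ s, (A s p - A s p') / outDegree A s * c s := by
  rw [← sub_sub_sub_cancel_right (c p) (c p') α, ← hPR p, ← hPR p', ← mul_sub,
    ← Finset.sum_sub_distrib]
  simp only [googleB, outDegree, sub_div, sub_mul]

theorem pageRank_mul_eq_of_twins (hPR : ∀ p, q * ∑ s, googleB A p s * c s = c p - α)
    {p p' : m} (hne : p ≠ p') (hcol : ∀ s, s ≠ p ∧ s ≠ p' → A s p = A s p')
    (hp : A p p = 0) (hp' : A p' p' = 0) (hpp' : A p p' = 1) (hp'p : A p' p = 1) :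
    c p * (1 + q / outDegree A p) = c p' * (1 + q / outDegree A p') := by
  have hsum : ∑ s, (A s p - A s p') / outDegree A s * c s =
      -1 / outDegree A p * c p + 1 / outDegree A p' * c p' := by
    rw [Fintype.sum_eq_add p p' hne fun s hs => by rw [hcol s hs, sub_self, zero_div, zero_mul],
      hp, hp', hpp', hp'p]
    norm_num
  have hsub := pageRank_sub_eq hPR p p'
  rw [hsum] at hsub
  linear_combination hsub

theorem pageRank_lt_of_dominates (hPR : ∀ p, q * ∑ s, googleB A p s * c s = c p - α)
    (hq : 0 < q) (hc : ∀ p, 0 < c p) (hA : ∀ s t, 0 ≤ A s t) {p p' : m}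
    (hdom : ∀ s, A s p' ≤ A s p) {s₀ : m} (hs₀ : A s₀ p' < A s₀ p) : c p' < c p := by
  have hterm : ∀ s, 0 ≤ (A s p - A s p') / outDegree A s * c s := fun s =>
    mul_nonneg (div_nonneg (sub_nonneg.2 (hdom s)) (outDegree_nonneg hA s)) (hc s).le
  have hpos : 0 < ∑ s, (A s p - A s p') / outDegree A s * c s := by
    refine Finset.sum_pos' (fun s _ => hterm s) ⟨s₀, Finset.mem_univ _, ?_⟩
    have hdeg : 0 < outDegree A s₀ := ((hA s₀ p').trans_lt hs₀).trans_le (le_outDegree hA s₀ p)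
    exact mul_pos (div_pos (sub_pos.2 hs₀) hdeg) (hc s₀)
  linarith [pageRank_sub_eq hPR p p', mul_pos hq hpos]

end PageRank

section DirBlockGraph

variable {k : ℕ} {r : Fin k → ℕ}

/-- Every node of block `i` points to every other node of block `j` (blocks are 0-based). -/
def blockLinked (i j : Fin k) : Prop :=
  (i : ℕ) = 0 ∨ (j : ℕ) = 0 ∨ j ≤ i

instance : DecidableRel (blockLinked (k := k)) := fun i j =>
  inferInstanceAs (Decidable ((i : ℕ) = 0 ∨ (j : ℕ) = 0 ∨ j ≤ i))

theorem blockLinked_refl (i : Fin k) : blockLinked i i :=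
  Or.inr (Or.inr le_rfl)

theorem dirBlockGraphAdj_apply (p t : (i : Fin k) × Fin (r i)) :
    dirBlockGraphAdj r p t =
      (if blockLinked p.1 t.1 then 1 else 0) - (if p = t then 1 else 0) := by
  have hlinked : p.1 ≠ t.1 → (blockLinked p.1 t.1 ↔
      ((p.1 : ℕ) = 0 ∨ (t.1 : ℕ) = 0 ∨ (t.1 : ℕ) < (p.1 : ℕ))) := fun hb => by
    have := Fin.val_ne_of_ne hb
    simp only [blockLinked, Fin.le_iff_val_le_val]
    omega
  by_cases hpt : p = t
  · simp [dirBlockGraphAdj, hpt, blockLinked_refl]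
  by_cases hb : p.1 = t.1
  · simp [dirBlockGraphAdj, hpt, hb, blockLinked_refl]
  · simp [dirBlockGraphAdj, hpt, hb, hlinked hb]

theorem dirBlockGraphAdj_nonneg (p t : (i : Fin k) × Fin (r i)) :
    0 ≤ dirBlockGraphAdj r p t := by
  unfold dirBlockGraphAdj
  split_ifs <;> norm_num

theorem dirBlockGraphAdj_self (p : (i : Fin k) × Fin (r i)) : dirBlockGraphAdj r p p = 0 := by
  simp [dirBlockGraphAdj_apply, blockLinked_refl]

theorem dirBlockGraphAdj_of_ne {p t : (i : Fin k) × Fin (r i)} (h : p ≠ t) :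
    dirBlockGraphAdj r p t = if blockLinked p.1 t.1 then 1 else 0 := by
  simp [dirBlockGraphAdj_apply, h]

theorem outDegree_dirBlockGraphAdj (p : (i : Fin k) × Fin (r i)) :
    outDegree (dirBlockGraphAdj r) p =
      #{t : (i : Fin k) × Fin (r i) | blockLinked p.1 t.1} - 1 := by
  simp [outDegree, dirBlockGraphAdj_apply, Finset.sum_sub_distrib]

theorem dirBlockGraphAdj_col_eq {p p' s : (i : Fin k) × Fin (r i)}
    (h : ∀ l, blockLinked l p.1 ↔ blockLinked l p'.1) (hs : s ≠ p ∧ s ≠ p') :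
    dirBlockGraphAdj r s p = dirBlockGraphAdj r s p' := by
  simp only [dirBlockGraphAdj_of_ne hs.1, dirBlockGraphAdj_of_ne hs.2, h]

theorem dirBlockGraphAdj_col_le {p p' s : (i : Fin k) × Fin (r i)}
    (h : ∀ l, blockLinked l p'.1 → blockLinked l p.1) (hpp' : ¬blockLinked p.1 p'.1) :
    dirBlockGraphAdj r s p' ≤ dirBlockGraphAdj r s p := by
  rcases eq_or_ne s p' with rfl | hs'
  · simpa [dirBlockGraphAdj_self] using dirBlockGraphAdj_nonneg s p
  rcases eq_or_ne s p with rfl | hs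
  · simp [dirBlockGraphAdj_self, dirBlockGraphAdj_of_ne hs', hpp']
  simp only [dirBlockGraphAdj_of_ne hs', dirBlockGraphAdj_of_ne hs]
  split_ifs with h₁ h₂ <;> first | exact absurd (h _ h₁) h₂ | norm_num

variable {q α : ℝ} {c : ((i : Fin k) × Fin (r i)) → ℝ}

theorem pageRank_dirBlockGraph_mul_eq
    (hPR : ∀ p, q * ∑ s, googleB (dirBlockGraphAdj r) p s * c s = c p - α)
    {p p' : (i : Fin k) × Fin (r i)} (hne : p ≠ p')
    (h : ∀ l, blockLinked l p.1 ↔ blockLinked l p'.1) :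
    c p * (1 + q / outDegree (dirBlockGraphAdj r) p) =
      c p' * (1 + q / outDegree (dirBlockGraphAdj r) p') :=
  pageRank_mul_eq_of_twins hPR hne (fun _ hs => dirBlockGraphAdj_col_eq h hs)
    (dirBlockGraphAdj_self p) (dirBlockGraphAdj_self p')
    (by simp [dirBlockGraphAdj_of_ne hne, (h p.1).1 (blockLinked_refl _)])
    (by simp [dirBlockGraphAdj_of_ne hne.symm, (h p'.1).2 (blockLinked_refl _)])

theorem pageRank_dirBlockGraph_eq_of_fst_eq
    (hPR : ∀ p, q * ∑ s, googleB (dirBlockGraphAdj r) p s * c s = c p - α) (hq : 0 ≤ q)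
    {p p' : (i : Fin k) × Fin (r i)} (hpp' : p.1 = p'.1) : c p = c p' := by
  rcases eq_or_ne p p' with rfl | hne
  · rfl
  have hmul := pageRank_dirBlockGraph_mul_eq hPR hne (by simp [hpp'])
  have hdeg : outDegree (dirBlockGraphAdj r) p = outDegree (dirBlockGraphAdj r) p' := by
    simp only [outDegree_dirBlockGraphAdj, hpp']
  have hfactor : 1 + q / outDegree (dirBlockGraphAdj r) p' ≠ 0 := by
    have := div_nonneg hq (outDegree_nonneg dirBlockGraphAdj_nonneg p')
    positivity
  rw [hdeg] at hmul
  exact mul_right_cancel₀ hfactor hmul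

theorem pageRank_dirBlockGraph_lt_of_pos_of_lt
    (hPR : ∀ p, q * ∑ s, googleB (dirBlockGraphAdj r) p s * c s = c p - α)
    (hq : 0 < q) (hc : ∀ p, 0 < c p) {p p' : (i : Fin k) × Fin (r i)}
    (hp : 0 < (p.1 : ℕ)) (hpp' : p.1 < p'.1) : c p' < c p := by
  have hp' : 0 < (p'.1 : ℕ) := hp.trans hpp'
  refine pageRank_lt_of_dominates hPR hq hc dirBlockGraphAdj_nonneg (s₀ := p')
    (fun s => dirBlockGraphAdj_col_le (fun l hl => ?_) ?_) ?_
  · simp only [blockLinked] at hl ⊢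
    omega
  · simp only [blockLinked, not_or, not_le]
    omega
  · have hne : p' ≠ p := fun h => hpp'.ne' (congrArg Sigma.fst h)
    have hlinked : blockLinked p'.1 p.1 := Or.inr (Or.inr hpp'.le)
    simp [dirBlockGraphAdj_self, dirBlockGraphAdj_of_ne hne, hlinked]

theorem pageRank_dirBlockGraph_block_one_lt_block_zero
    (hPR : ∀ p, q * ∑ s, googleB (dirBlockGraphAdj r) p s * c s = c p - α)
    (hq : 0 < q) (hc : ∀ p, 0 < c p) {p p' t : (i : Fin k) × Fin (r i)}
    (hp : (p.1 : ℕ) = 0) (hp' : (p'.1 : ℕ) = 1) (ht : 2 ≤ (t.1 : ℕ)) : c p' < c p := by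
  have hne : p ≠ p' := fun h => by simp [h, hp'] at hp
  have hmul := pageRank_dirBlockGraph_mul_eq hPR hne (fun l => by simp [blockLinked]; omega)
  have hdeg_pos : 0 < outDegree (dirBlockGraphAdj r) p' :=
    lt_of_lt_of_le (by simp [dirBlockGraphAdj_of_ne hne.symm, blockLinked, hp])
      (le_outDegree dirBlockGraphAdj_nonneg p' p)
  have hdeg_lt : outDegree (dirBlockGraphAdj r) p' < outDegree (dirBlockGraphAdj r) p := by
    simp only [outDegree_dirBlockGraphAdj, sub_lt_sub_iff_right, Nat.cast_lt]
    calc #{s : (i : Fin k) × Fin (r i) | blockLinked p'.1 s.1}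
        < #(Finset.univ : Finset ((i : Fin k) × Fin (r i))) := by
          refine Finset.card_lt_card (Finset.filter_ssubset.2 ⟨t, Finset.mem_univ _, ?_⟩)
          simp only [blockLinked, Fin.le_iff_val_le_val, hp']
          omega
      _ = #{s : (i : Fin k) × Fin (r i) | blockLinked p.1 s.1} :=
          congrArg Finset.card (Finset.filter_true_of_mem fun _ _ => Or.inl hp).symm
  have hfactor : 1 + q / outDegree (dirBlockGraphAdj r) p <
      1 + q / outDegree (dirBlockGraphAdj r) p' := by
    gcongr
  have hfactor_nonneg : 0 ≤ 1 + q / outDegree (dirBlockGraphAdj r) p := by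
    have := outDegree_nonneg dirBlockGraphAdj_nonneg p
    positivity
  exact lt_of_mul_lt_mul_right
    ((mul_lt_mul_of_pos_left hfactor (hc p')).trans_eq hmul.symm) hfactor_nonneg

end DirBlockGraph

theorem pageRank_ranking_dirBlockGraph_general {n k : ℕ} (hk : 3 ≤ k)
    (q : ℝ) (hq : q ∈ Set.Ioo (0:ℝ) 1)
    (r : Fin k → ℕ) (hr : ∀ i, 1 ≤ r i)
    (c : ((i : Fin k) × Fin (r i)) → ℝ)
    (hpos : ∀ p, 0 < c p)
    (hPR : ∀ p, q * ∑ s, googleB (dirBlockGraphAdj r) p s * c s = c p - (1 - q) / n) :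
    (∀ (i : Fin k) (a b : Fin (r i)), c ⟨i, a⟩ = c ⟨i, b⟩) ∧
    (∀ i j : Fin k, i < j →
      c ⟨j, ⟨0, hr j⟩⟩ < c ⟨i, ⟨0, hr i⟩⟩) := by
  refine ⟨fun i a b => pageRank_dirBlockGraph_eq_of_fst_eq hPR hq.1.le rfl, fun i j hij => ?_⟩
  rcases Nat.eq_zero_or_pos (i : ℕ) with hi | hi
  · obtain ⟨b₁, hb₁⟩ : ∃ b : Fin k, (b : ℕ) = 1 := ⟨⟨1, by omega⟩, rfl⟩
    have h₁ : c ⟨b₁, ⟨0, hr b₁⟩⟩ < c ⟨i, ⟨0, hr i⟩⟩ :=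
      pageRank_dirBlockGraph_block_one_lt_block_zero hPR hq.1 hpos hi hb₁
        (t := ⟨⟨2, by omega⟩, ⟨0, hr _⟩⟩) le_rfl
    by_cases hj : (j : ℕ) = 1
    · obtain rfl : j = b₁ := Fin.ext (hj.trans hb₁.symm)
      exact h₁
    · have hb₁j : b₁ < j := by
        rw [Fin.lt_def] at hij ⊢
        omega
      exact (pageRank_dirBlockGraph_lt_of_pos_of_lt hPR hq.1 hpos (by simp [hb₁]) hb₁j).trans h₁
  · exact pageRank_dirBlockGraph_lt_of_pos_of_lt hPR hq.1 hpos hi hij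

/-- For `k ≥ 3`, the PageRank centrality of the loopless directed graph `G⃗(r₁,…,r_k)`
with damping factor `q` is constant on each block and its common block values are
strictly decreasing. -/
theorem pageRank_ranking_dirBlockGraph {n k : ℕ} (hk : 3 ≤ k)
    (q : ℝ) (hq : q ∈ Set.Ioo (0:ℝ) 1)
    (r : Fin k → ℕ) (hr : ∀ i, 1 ≤ r i) (hsum : ∑ i, r i = n)
    (c : ((i : Fin k) × Fin (r i)) → ℝ)
    (hpos : ∀ p, 0 < c p) (hnorm : ∑ p, c p = 1)
    (hPR : ∀ p, q * ∑ s, googleB (dirBlockGraphAdj r) p s * c s = c p - (1 - q) / n) :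
    (∀ (i : Fin k) (a b : Fin (r i)), c ⟨i, a⟩ = c ⟨i, b⟩) ∧
    (∀ i j : Fin k, i < j →
      c ⟨j, ⟨0, hr j⟩⟩ < c ⟨i, ⟨0, hr i⟩⟩) :=
  pageRank_ranking_dirBlockGraph_general hk q hq r hr c hpos hPR
end

section
/- Let n ≥ 3 and let G⃗ be the directed graph on nodes {1,…,n} with edges (i, i+1) for 1 ≤ i ≤ n−1, edge (n,1), and edges (i,1) for 2 ≤ i ≤ n−1; that is, its adjacency matrix A has a_{i,i+1} = 1 for i < n, a_{i,1} = 1 for i ≥ 2, and all other entries zero. Then the eigenvector centrality c = (c₁,…,c_n)ᵗ of G⃗ satisfies the strict ranking c₁ > c₂ > ⋯ > c_n. -/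
open Matrix BigOperators

/-- The adjacency matrix (0-based indices) of the digraph with edges `(i, i+1)` for
`i < n - 1`, and edges `(i, 0)` for `i ≥ 1`. -/
def cycleChordAdj (n : ℕ) : Matrix (Fin n) (Fin n) ℝ :=
  fun i j => if (j : ℕ) = (i : ℕ) + 1 then 1
    else if 1 ≤ (i : ℕ) ∧ (j : ℕ) = 0 then 1 else 0

/-!
Reading the eigenvector equations `Aᵀ c = ρ c` from the bottom up gives `c_{i-1} = ρ c_i`,
so the ranking is strict as soon as `ρ > 1`. For `n ≥ 3` the first equation gives
`ρ² c₂ = ρ c₁ ≥ c₂ + c₃ > c₂`, hence `ρ > 1`.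
-/

section CycleChordAdj

variable {k : ℕ} (c : Fin (k + 1) → ℝ)

theorem cycleChordAdj_transpose_mulVec_succ (i : Fin k) :
    ((cycleChordAdj (k + 1))ᵀ *ᵥ c) i.succ = c i.castSucc := by
  rw [mulVec, dotProduct, Finset.sum_eq_single i.castSucc]
  · simp [cycleChordAdj]
  · intro j _ hj
    have hji : (i : ℕ) ≠ j := fun h => hj (Fin.ext h.symm)
    simp [cycleChordAdj, hji]
  · simp

theorem cycleChordAdj_transpose_mulVec_zero :
    ((cycleChordAdj (k + 1))ᵀ *ᵥ c) 0 = ∑ i : Fin k, c i.succ := by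
  simp [mulVec, dotProduct, Fin.sum_univ_succ, cycleChordAdj]

end CycleChordAdj

section ShiftRecurrence

variable {k : ℕ} {ρ : ℝ}

theorem one_lt_of_mul_succ_eq (c : Fin (k + 3) → ℝ) (hpos : ∀ i, 0 < c i)
    (hshift : ∀ i : Fin (k + 2), ρ * c i.succ = c i.castSucc)
    (hzero : ρ * c 0 = ∑ i : Fin (k + 2), c i.succ) : 1 < ρ := by
  have hc0 : ρ * c 1 = c 0 := hshift 0
  have hρ : 0 < ρ := pos_of_mul_pos_left (hc0 ▸ hpos 0) (hpos 1).le
  have hsum : c 1 + c 2 ≤ ρ * c 0 := by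
    have htail : 0 ≤ ∑ i : Fin k, c i.succ.succ.succ := Finset.sum_nonneg fun i _ => (hpos _).le
    rw [hzero, Fin.sum_univ_succ, Fin.sum_univ_succ]
    simp only [Fin.succ_zero_eq_one, Fin.succ_one_eq_two]
    linarith
  by_contra! hle
  have hρsq : ρ * ρ ≤ 1 := by nlinarith
  have : ρ * c 0 ≤ c 1 := calc
    ρ * c 0 = ρ * ρ * c 1 := by rw [← hc0, mul_assoc]
    _ ≤ c 1 := mul_le_of_le_one_left (hpos 1).le hρsq
  linarith [hpos 2]

theorem strictAnti_of_mul_succ_eq (hρ : 1 < ρ) (c : Fin (k + 1) → ℝ) (hpos : ∀ i, 0 < c i)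
    (hshift : ∀ i : Fin k, ρ * c i.succ = c i.castSucc) : StrictAnti c :=
  Fin.strictAnti_iff_succ_lt.mpr fun i => by
    rw [← hshift i]
    exact lt_mul_left (hpos _) hρ

end ShiftRecurrence

theorem eigenvector_strict_ranking_general (n : ℕ) (hn : 3 ≤ n)
    (c : Fin n → ℝ) (hpos : ∀ i, 0 < c i)
    (heig : (cycleChordAdj n)ᵀ.mulVec c = specRad (cycleChordAdj n) • c) :
    ∀ i j : Fin n, i < j → c j < c i := by
  obtain ⟨k, rfl⟩ : ∃ k, n = k + 3 := ⟨n - 3, by omega⟩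
  set ρ := specRad (cycleChordAdj (k + 3))
  have hshift (i : Fin (k + 2)) : ρ * c i.succ = c i.castSucc := by
    simpa [← cycleChordAdj_transpose_mulVec_succ c i] using (congrFun heig i.succ).symm
  have hzero : ρ * c 0 = ∑ i : Fin (k + 2), c i.succ := by
    simpa [← cycleChordAdj_transpose_mulVec_zero c] using (congrFun heig 0).symm
  exact strictAnti_of_mul_succ_eq (one_lt_of_mul_succ_eq c hpos hshift hzero) c hpos hshift

/-- The eigenvector centrality of the above digraph is strictly decreasing, i.e. it realizes
the strict ranking `c₁ > c₂ > ⋯ > c_n`. -/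
theorem eigenvector_strict_ranking (n : ℕ) (hn : 3 ≤ n)
    (c : Fin n → ℝ) (hpos : ∀ i, 0 < c i) (hnorm : ∑ i, c i = 1)
    (heig : (cycleChordAdj n)ᵀ.mulVec c = specRad (cycleChordAdj n) • c) :
    ∀ i j : Fin n, i < j → c j < c i :=
  eigenvector_strict_ranking_general n hn c hpos heig
end

section
/- Let G⃗ be the 6-node directed graph without loops whose adjacency matrix is A⃗(1,3,2), with rows (0,1,1,1,1,1), (1,0,1,1,0,0), (1,1,0,1,0,0), (1,1,1,0,0,0), (1,1,1,1,0,1), (1,1,1,1,1,0). For any damping factor q ∈ (0,1), the PageRank centrality c of G⃗ with damping factor q satisfies c₁ > c₂ = c₃ = c₄ > c₅ = c₆. -/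
/-!
PageRank compares two nodes through their in-neighbourhoods: subtracting the defining
equations of nodes `i` and `j` gives `c i - c j = q ∑ₖ (A k i - A k j) c k / outdeg k`.
If the in-neighbourhood of `j` is contained in that of `i`, every term is nonnegative.
If `i` and `j` point to each other and share all other in-neighbours, only the terms `k = i, j`
survive and `c i (1 + q / outdeg i) = c j (1 + q / outdeg j)`, so the node of larger outdegree
ranks higher. In `A⃗(1,3,2)` the pairs `(0,1)`, `(1,2)`, `(2,3)`, `(4,5)` are of the second kind
and the in-neighbourhood of `4` is contained in that of `3`.
-/

open Matrix BigOperators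

/-- The adjacency matrix `A⃗(1,3,2)` of the 6-node directed graph without loops. -/
def dirA132 : Matrix (Fin 6) (Fin 6) ℝ :=
  !![0,1,1,1,1,1;
     1,0,1,1,0,0;
     1,1,0,1,0,0;
     1,1,1,0,0,0;
     1,1,1,1,0,1;
     1,1,1,1,1,0]

namespace PageRank

variable {m : Type*} [Fintype m]

def outdeg (A : Matrix m m ℝ) (k : m) : ℝ := ∑ t, A k t

theorem googleB_apply (A : Matrix m m ℝ) (i j : m) : googleB A i j = A j i / outdeg A j := rfl

/-- `c = q B c + r`; PageRank is the case `r = (1 - q) / card m`, `∑ i, c i = 1`. -/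
def SolvesEq (A : Matrix m m ℝ) (q r : ℝ) (c : m → ℝ) : Prop :=
  ∀ i, q * ∑ j, googleB A i j * c j = c i - r

structure IsTrueInTwins (A : Matrix m m ℝ) (i j : m) : Prop where
  ne : i ≠ j
  diag_left : A i i = 0
  diag_right : A j j = 0
  adj_left : A i j = 1
  adj_right : A j i = 1
  col_eq : ∀ k, k ≠ i → k ≠ j → A k i = A k j

variable {A : Matrix m m ℝ} {q r : ℝ} {c : m → ℝ}

theorem SolvesEq.sub_eq_mul_sum (hc : SolvesEq A q r c) (i j : m) :
    c i - c j = q * ∑ k, (A k i - A k j) / outdeg A k * c k := by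
  have hi := hc i
  have hj := hc j
  simp only [googleB_apply] at hi hj
  simp only [sub_div, sub_mul, Finset.sum_sub_distrib, mul_sub]
  linarith

theorem SolvesEq.lt_of_col_le_of_col_lt (hc : SolvesEq A q r c) (hq : 0 < q)
    (hpos : ∀ k, 0 < c k) (hdeg : ∀ k, 0 < outdeg A k) {i j : m}
    (hle : ∀ k, A k j ≤ A k i) (hlt : ∃ k, A k j < A k i) : c j < c i := by
  have hsum : 0 < ∑ k, (A k i - A k j) / outdeg A k * c k := by
    obtain ⟨k, hk⟩ := hlt
    refine Finset.sum_pos' (fun l _ => ?_) ⟨k, Finset.mem_univ k, ?_⟩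
    · exact mul_nonneg (div_nonneg (sub_nonneg.2 (hle l)) (hdeg l).le) (hpos l).le
    · exact mul_pos (div_pos (sub_pos.2 hk) (hdeg k)) (hpos k)
  linarith [hc.sub_eq_mul_sum i j, mul_pos hq hsum]

theorem IsTrueInTwins.mul_one_add_div_outdeg_eq {i j : m} (ht : IsTrueInTwins A i j)
    (hc : SolvesEq A q r c) : c i * (1 + q / outdeg A i) = c j * (1 + q / outdeg A j) := by
  have h := hc.sub_eq_mul_sum i j
  rw [Finset.sum_eq_add_of_mem i j (Finset.mem_univ i) (Finset.mem_univ j) ht.ne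
    (fun k _ hk => by rw [ht.col_eq k hk.1 hk.2, sub_self, zero_div, zero_mul])] at h
  rw [ht.diag_left, ht.diag_right, ht.adj_left, ht.adj_right] at h
  linear_combination h

theorem IsTrueInTwins.eq {i j : m} (ht : IsTrueInTwins A i j) (hc : SolvesEq A q r c)
    (hq : 0 ≤ q) (hdeg : 0 ≤ outdeg A i) (hdeg_eq : outdeg A i = outdeg A j) : c i = c j := by
  have h := ht.mul_one_add_div_outdeg_eq hc
  rw [← hdeg_eq] at h
  exact mul_right_cancel₀ (add_pos_of_pos_of_nonneg one_pos (div_nonneg hq hdeg)).ne' h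

theorem IsTrueInTwins.lt_of_outdeg_lt {i j : m} (ht : IsTrueInTwins A i j)
    (hc : SolvesEq A q r c) (hq : 0 < q) (hcj : 0 < c j) (hdeg : 0 < outdeg A j)
    (hdeg_lt : outdeg A j < outdeg A i) : c j < c i := by
  have hdiv : q / outdeg A i < q / outdeg A j := div_lt_div_of_pos_left hq hdeg hdeg_lt
  have h : c j * (1 + q / outdeg A i) < c i * (1 + q / outdeg A i) := by
    rw [ht.mul_one_add_div_outdeg_eq hc]
    exact mul_lt_mul_of_pos_left (by linarith) hcj
  exact lt_of_mul_lt_mul_right h (by linarith [div_pos hq (hdeg.trans hdeg_lt)])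

end PageRank

open PageRank

theorem outdeg_dirA132 (k : Fin 6) : outdeg dirA132 k = ![5, 3, 3, 3, 5, 5] k := by
  fin_cases k <;> norm_num [outdeg, dirA132, Fin.sum_univ_succ]

theorem isTrueInTwins_dirA132 :
    IsTrueInTwins dirA132 0 1 ∧ IsTrueInTwins dirA132 1 2 ∧ IsTrueInTwins dirA132 2 3 ∧
      IsTrueInTwins dirA132 4 5 := by
  refine ⟨?_, ?_, ?_, ?_⟩ <;> constructor
  all_goals try (intro k; fin_cases k)
  all_goals simp [dirA132]

theorem pageRank_ranking_dirG132_general (q : ℝ) (hq : q ∈ Set.Ioo (0:ℝ) 1)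
    (c : Fin 6 → ℝ) (hpos : ∀ i, 0 < c i)
    (hPR : ∀ i, q * ∑ j, googleB dirA132 i j * c j = c i - (1 - q) / 6) :
    c 1 < c 0 ∧ c 1 = c 2 ∧ c 2 = c 3 ∧ c 4 < c 3 ∧ c 4 = c 5 := by
  obtain ⟨hq0, -⟩ := hq
  obtain ⟨t01, t12, t23, t45⟩ := isTrueInTwins_dirA132
  have hdeg (k : Fin 6) : 0 < outdeg dirA132 k := by fin_cases k <;> simp [outdeg_dirA132]
  refine ⟨t01.lt_of_outdeg_lt hPR hq0 (hpos 1) (hdeg 1) ?_,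
    t12.eq hPR hq0.le (hdeg 1).le ?_, t23.eq hPR hq0.le (hdeg 2).le ?_,
    SolvesEq.lt_of_col_le_of_col_lt hPR hq0 hpos hdeg ?_ ⟨1, ?_⟩,
    t45.eq hPR hq0.le (hdeg 4).le ?_⟩
  · norm_num [outdeg_dirA132, cons_val_one, cons_val_zero]
  · simp [outdeg_dirA132]
  · simp [outdeg_dirA132]
  · intro k; fin_cases k <;> simp [dirA132]
  · simp [dirA132]
  · simp [outdeg_dirA132]

/-- For any damping factor `q ∈ (0,1)`, the PageRank centrality of `G⃗(1,3,2)` satisfies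
`c₁ > c₂ = c₃ = c₄ > c₅ = c₆`. -/
theorem pageRank_ranking_dirG132 (q : ℝ) (hq : q ∈ Set.Ioo (0:ℝ) 1)
    (c : Fin 6 → ℝ) (hpos : ∀ i, 0 < c i) (hnorm : ∑ i, c i = 1)
    (hPR : ∀ i, q * ∑ j, googleB dirA132 i j * c j = c i - (1 - q) / 6) :
    c 1 < c 0 ∧ c 1 = c 2 ∧ c 2 = c 3 ∧ c 4 < c 3 ∧ c 4 = c 5 :=
  pageRank_ranking_dirG132_general q hq c hpos hPR
end

section
/- For every q ∈ (0,1), every n ∈ ℕ, and every surjective map φ : {1,…,n} → {1,…,k} with k ≥ 3, there exists an unweighted directed graph WITHOUT loops on n nodes, in which every node has positive outdegree, whose PageRank centrality c with damping factor q satisfies: c_i > c_j iff φ(i) < φ(j), and c_i = c_j iff φ(i) = φ(j). -/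
/-!
Put node `i` on level `φ i ∈ {0, 1, 2, …}`: a node of level `0` links to every other node, a node
of level `a > 0` to the other nodes of level at most `a`.

PageRank exists and is positive: if `B ≥ 0` has column sums at most `1` and `0 ≤ q < 1`, every
solution of `c = b + q B c` with `b ≥ 0` is nonnegative, because the negative part `u = min c 0`
satisfies `u ≤ q B u`, hence `∑ u ≤ q ∑ u`. So `1 - q B` is injective, hence invertible.

In this graph the in-neighbours of a node are determined by its level, and the PageRank equation
at a node `i` of level `a` with outdegree `d a` reads `c i (1 + q / d a) = β + q G a`, where `G a`
is the sum of `c t / d (φ t)` over the in-neighbours `t` of `i` and `i` itself. Hence PageRank is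
constant on levels. For `0 < a < b`, `G a ≥ G b + c i / d a`, which gives `c i > c j` for `j` on
level `b`. Levels `0` and `1` have the same in-neighbours, and level `0` has the larger outdegree,
hence the larger PageRank.
-/

open Matrix BigOperators

open Finset

section PageRank

variable {m : Type*} [Fintype m]

theorem sum_mulVec_eq_sum_mul (B : Matrix m m ℝ) (u : m → ℝ) :
    ∑ i, (B *ᵥ u) i = ∑ j, (∑ i, B i j) * u j := by
  simp only [mulVec, dotProduct, Finset.sum_mul]
  exact Finset.sum_comm

section SubStochastic

variable {B : Matrix m m ℝ} (hB : ∀ i j, 0 ≤ B i j) (hcol : ∀ j, ∑ i, B i j ≤ 1)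
  {q : ℝ} (hq0 : 0 ≤ q) (hq1 : q < 1)
include hB hcol hq0 hq1

theorem nonneg_of_eq_add_smul_mulVec {b c : m → ℝ} (hb : 0 ≤ b) (hc : c = b + q • B *ᵥ c) :
    0 ≤ c := by
  set u : m → ℝ := fun i => min (c i) 0
  have hu_nonpos : ∀ i, u i ≤ 0 := fun i => min_le_right _ _
  have hBu : ∀ i, q * (B *ᵥ u) i ≤ u i := by
    intro i
    have hBu_le : (B *ᵥ u) i ≤ (B *ᵥ c) i :=
      Finset.sum_le_sum fun j _ => mul_le_mul_of_nonneg_left (min_le_left _ _) (hB i j)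
    have hBu_nonpos : (B *ᵥ u) i ≤ 0 :=
      Finset.sum_nonpos fun j _ => mul_nonpos_of_nonneg_of_nonpos (hB i j) (hu_nonpos j)
    have hci : c i = b i + q * (B *ᵥ c) i := congrFun hc i
    refine le_min ?_ (mul_nonpos_of_nonneg_of_nonpos hq0 hBu_nonpos)
    linarith [show 0 ≤ b i from hb i, mul_le_mul_of_nonneg_left hBu_le hq0]
  have hsum : q * ∑ i, u i ≤ ∑ i, u i := calc
    q * ∑ i, u i ≤ q * ∑ j, (∑ i, B i j) * u j := by
      gcongr with j
      nlinarith [hcol j, hu_nonpos j]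
    _ = ∑ i, q * (B *ᵥ u) i := by rw [← Finset.mul_sum, sum_mulVec_eq_sum_mul]
    _ ≤ ∑ i, u i := Finset.sum_le_sum fun i _ => hBu i
  have hsum_zero : ∑ i, u i = 0 :=
    le_antisymm (Finset.sum_nonpos fun i _ => hu_nonpos i) (by nlinarith)
  intro i
  have hui : u i = 0 := (Finset.sum_eq_zero_iff_of_nonpos fun i _ => hu_nonpos i).mp hsum_zero i
    (Finset.mem_univ i)
  exact min_eq_right_iff.mp hui

theorem exists_eq_add_smul_mulVec (b : m → ℝ) : ∃ c, c = b + q • B *ᵥ c := by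
  classical
  have hinj : Function.Injective (1 - q • B).mulVec := by
    intro v w hvw
    have hfix : ∀ d : m → ℝ, (1 - q • B) *ᵥ d = 0 → d = 0 + q • B *ᵥ d := fun d hd => by
      rw [sub_mulVec, one_mulVec, smul_mulVec, sub_eq_zero] at hd
      rw [zero_add, ← hd]
    have hd : (1 - q • B) *ᵥ (v - w) = 0 := by rw [mulVec_sub, hvw, sub_self]
    have hd_nonneg := nonneg_of_eq_add_smul_mulVec hB hcol hq0 hq1 le_rfl (hfix _ hd)
    have hd_nonpos := nonneg_of_eq_add_smul_mulVec hB hcol hq0 hq1 le_rfl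
      (hfix _ (by rw [mulVec_neg, hd, neg_zero]))
    exact sub_eq_zero.mp (le_antisymm (fun i => by simpa using hd_nonpos i) hd_nonneg)
  obtain ⟨c, hc⟩ := mulVec_surjective_iff_isUnit.mpr (mulVec_injective_iff_isUnit.mp hinj) b
  refine ⟨c, ?_⟩
  rw [← hc, sub_mulVec, one_mulVec, smul_mulVec, sub_add_cancel]

end SubStochastic

theorem one_sub_mul_sum_eq_sum {B : Matrix m m ℝ} (hcol : ∀ j, ∑ i, B i j = 1) {q : ℝ}
    {b c : m → ℝ} (hc : c = b + q • B *ᵥ c) : (1 - q) * ∑ i, c i = ∑ i, b i := by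
  have hBc : ∑ i, (B *ᵥ c) i = ∑ i, c i := by simp [sum_mulVec_eq_sum_mul, hcol]
  have hsum : ∑ i, c i = ∑ i, b i + q * ∑ i, c i := by
    conv_lhs => rw [hc]
    simp [Finset.sum_add_distrib, ← Finset.mul_sum, hBc]
  linarith

theorem googleB_nonneg {A : Matrix m m ℝ} (hA : ∀ i j, 0 ≤ A i j) (i j : m) :
    0 ≤ googleB A i j :=
  div_nonneg (hA j i) (Finset.sum_nonneg fun t _ => hA j t)

theorem sum_googleB_apply {A : Matrix m m ℝ} (hdeg : ∀ i, ∑ j, A i j ≠ 0) (j : m) :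
    ∑ i, googleB A i j = 1 := by
  simp only [googleB, ← Finset.sum_div]
  exact div_self (hdeg j)

theorem exists_pageRank [Nonempty m] (A : Matrix m m ℝ) (hA : ∀ i j, 0 ≤ A i j)
    (hdeg : ∀ i, 0 < ∑ j, A i j) {q : ℝ} (hq0 : 0 ≤ q) (hq1 : q < 1) :
    ∃ c : m → ℝ, (∀ i, 0 < c i) ∧ ∑ i, c i = 1 ∧
      ∀ i, c i = (1 - q) / Fintype.card m + q * (googleB A *ᵥ c) i := by
  have hcard : (0 : ℝ) < Fintype.card m := by exact_mod_cast Fintype.card_pos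
  set β := (1 - q) / Fintype.card m
  have hβ : 0 < β := div_pos (by linarith) hcard
  have hcol := sum_googleB_apply fun i => (hdeg i).ne'
  have hB := googleB_nonneg hA
  obtain ⟨c, hc⟩ := exists_eq_add_smul_mulVec hB (fun j => (hcol j).le) hq0 hq1 fun _ => β
  have hc_nonneg := nonneg_of_eq_add_smul_mulVec hB (fun j => (hcol j).le) hq0 hq1
    (fun _ => hβ.le) hc
  have hci : ∀ i, c i = β + q * (googleB A *ᵥ c) i := fun i => congrFun hc i
  refine ⟨c, fun i => ?_, ?_, hci⟩
  · have : 0 ≤ (googleB A *ᵥ c) i :=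
      Finset.sum_nonneg fun j _ => mul_nonneg (hB i j) (hc_nonneg j)
    rw [hci]
    positivity
  · have hsum := one_sub_mul_sum_eq_sum hcol hc
    rw [Finset.sum_const, Finset.card_univ, nsmul_eq_mul, mul_div_cancel₀ _ hcard.ne'] at hsum
    exact mul_left_cancel₀ (sub_ne_zero.mpr hq1.ne') (hsum.trans (mul_one _).symm)

end PageRank

theorem lt_iff_lt_and_eq_iff_eq_of_forall_lt {ι α β : Type*} [LinearOrder α] [LinearOrder β]
    {f : ι → α} {g : ι → β} (hlt : ∀ i j, f i < f j → g j < g i)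
    (heq : ∀ i j, f i = f j → g i = g j) (i j : ι) :
    (g j < g i ↔ f i < f j) ∧ (g i = g j ↔ f i = f j) := by
  rcases lt_trichotomy (f i) (f j) with h | h | h
  · exact ⟨iff_of_true (hlt i j h) h, iff_of_false (hlt i j h).ne' h.ne⟩
  · exact ⟨iff_of_false (heq i j h).not_gt h.not_lt, iff_of_true (heq i j h) h⟩
  · exact ⟨iff_of_false (hlt j i h).not_gt h.not_gt, iff_of_false (hlt j i h).ne h.ne'⟩

section LevelGraph

variable {ι : Type*} (φ : ι → ℕ)

open Classical in
/-- The graph `G⃗(r₁, …, r_k)`, with levels counted from `0`. -/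
noncomputable def levelGraph : Matrix ι ι ℝ :=
  fun i j => if i ≠ j ∧ (φ i = 0 ∨ φ j ≤ φ i) then 1 else 0

theorem levelGraph_apply_eq_zero_or_one (i j : ι) :
    levelGraph φ i j = 0 ∨ levelGraph φ i j = 1 := by
  unfold levelGraph
  split_ifs <;> simp

theorem levelGraph_nonneg (i j : ι) : 0 ≤ levelGraph φ i j := by
  rcases levelGraph_apply_eq_zero_or_one φ i j with h | h <;> simp [h]

theorem levelGraph_apply_self (i : ι) : levelGraph φ i i = 0 := by
  simp [levelGraph]

variable [Fintype ι]

/-- The in-neighbours of any node of level `a`, together with that node. -/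
def levelSources (a : ℕ) : Finset ι := {t | φ t = 0 ∨ a ≤ φ t}

noncomputable def levelOutdeg (a : ℕ) : ℝ := #({t | a = 0 ∨ φ t ≤ a} : Finset ι) - 1

noncomputable def levelInflow (c : ι → ℝ) (a : ℕ) : ℝ :=
  ∑ t ∈ levelSources φ a, c t / levelOutdeg φ (φ t)

theorem mem_levelSources_self (i : ι) : i ∈ levelSources φ (φ i) := by
  simp [levelSources]

theorem levelSources_one : levelSources φ 1 = (levelSources φ 0 : Finset ι) := by
  ext t
  simp only [levelSources, Finset.mem_filter, Finset.mem_univ, true_and]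
  omega

theorem sum_levelGraph_apply (i : ι) : ∑ j, levelGraph φ i j = levelOutdeg φ (φ i) := by
  classical
  have hrow : ∀ j, levelGraph φ i j =
      (if φ i = 0 ∨ φ j ≤ φ i then 1 else 0) - if j = i then 1 else 0 := by
    intro j
    by_cases hji : j = i
    · simp [levelGraph, hji]
    · simp [levelGraph, hji, Ne.symm hji]
  simp [hrow, Finset.sum_sub_distrib, levelOutdeg, Finset.sum_boole]

theorem levelOutdeg_nonneg (i : ι) : 0 ≤ levelOutdeg φ (φ i) := by
  rw [← sum_levelGraph_apply]
  exact Finset.sum_nonneg fun j _ => levelGraph_nonneg φ i j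

theorem levelOutdeg_pos {i₀ i₁ : ι} (h₀ : φ i₀ = 0) (h₁ : φ i₁ ≠ 0) (i : ι) :
    0 < levelOutdeg φ (φ i) := by
  have hcard : 1 < #({t | φ i = 0 ∨ φ t ≤ φ i} : Finset ι) := by
    rw [Finset.one_lt_card]
    by_cases hi : φ i = 0
    · exact ⟨i, by simp [hi], i₁, by simp [hi], fun h => h₁ (h ▸ hi)⟩
    · exact ⟨i, by simp, i₀, by simp [h₀], fun h => hi (h ▸ h₀)⟩
  unfold levelOutdeg
  linarith [show (1 : ℝ) < #({t | φ i = 0 ∨ φ t ≤ φ i} : Finset ι) by exact_mod_cast hcard]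

theorem levelOutdeg_one_lt_zero {i₂ : ι} (h₂ : 2 ≤ φ i₂) : levelOutdeg φ 1 < levelOutdeg φ 0 := by
  have hcard : #({t | 1 = 0 ∨ φ t ≤ 1} : Finset ι) < #({t | 0 = 0 ∨ φ t ≤ 0} : Finset ι) := by
    refine Finset.card_lt_card ?_
    simp only [true_or, Finset.filter_true, one_ne_zero, false_or]
    exact Finset.filter_ssubset.mpr ⟨i₂, Finset.mem_univ _, by omega⟩
  unfold levelOutdeg
  exact sub_lt_sub_right (by exact_mod_cast hcard) 1

theorem googleB_levelGraph_mulVec (c : ι → ℝ) (i : ι) :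
    (googleB (levelGraph φ) *ᵥ c) i =
      levelInflow φ c (φ i) - c i / levelOutdeg φ (φ i) := by
  classical
  have hterm : ∀ j, googleB (levelGraph φ) i j * c j =
      (if j ∈ levelSources φ (φ i) then c j / levelOutdeg φ (φ j) else 0) -
        if j = i then c j / levelOutdeg φ (φ j) else 0 := by
    intro j
    rw [googleB, sum_levelGraph_apply]
    by_cases hji : j = i
    · subst hji
      simp [levelGraph_apply_self, mem_levelSources_self]
    · simp [levelGraph, levelSources, hji, div_eq_inv_mul]
  simp only [mulVec, dotProduct, hterm, Finset.sum_sub_distrib, Finset.sum_ite_mem,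
    Finset.univ_inter, Finset.sum_ite_eq', Finset.mem_univ, if_true, levelInflow]

theorem levelInflow_add_div_le {c : ι → ℝ} (hc : 0 ≤ c) {i : ι} {b : ℕ} (hi : φ i ≠ 0)
    (hib : φ i < b) :
    levelInflow φ c b + c i / levelOutdeg φ (φ i) ≤ levelInflow φ c (φ i) := by
  classical
  have hi_not_mem : i ∉ levelSources φ b := by
    simp only [levelSources, Finset.mem_filter, Finset.mem_univ, true_and]
    omega
  have hsub : insert i (levelSources φ b) ⊆ levelSources φ (φ i) := by
    intro t
    simp only [levelSources, Finset.mem_insert, Finset.mem_filter, Finset.mem_univ, true_and]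
    rintro (rfl | ht) <;> omega
  calc levelInflow φ c b + c i / levelOutdeg φ (φ i)
      = ∑ t ∈ insert i (levelSources φ b), c t / levelOutdeg φ (φ t) := by
        rw [Finset.sum_insert hi_not_mem, add_comm, levelInflow]
    _ ≤ levelInflow φ c (φ i) :=
        Finset.sum_le_sum_of_subset_of_nonneg hsub fun t _ _ =>
          div_nonneg (hc t) (levelOutdeg_nonneg φ t)

section PageRankEquation

variable {φ} {q β : ℝ} {c : ι → ℝ} (hc : ∀ i, c i = β + q * (googleB (levelGraph φ) *ᵥ c) i)
include hc

theorem pageRank_levelGraph_mul_eq (i : ι) :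
    c i * (1 + q / levelOutdeg φ (φ i)) = β + q * levelInflow φ c (φ i) := by
  have h := hc i
  rw [googleB_levelGraph_mulVec] at h
  linear_combination h

theorem pageRank_levelGraph_eq_of_level_eq (hq : 0 ≤ q) {i j : ι} (hij : φ i = φ j) :
    c i = c j := by
  have hfactor : 0 < 1 + q / levelOutdeg φ (φ j) :=
    add_pos_of_pos_of_nonneg one_pos (div_nonneg hq (levelOutdeg_nonneg φ j))
  have hi := pageRank_levelGraph_mul_eq hc i
  rw [hij] at hi
  exact mul_right_cancel₀ hfactor.ne' (hi.trans (pageRank_levelGraph_mul_eq hc j).symm)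

theorem pageRank_levelGraph_lt_of_level_lt_of_ne_zero (hq : 0 < q) (hc0 : ∀ t, 0 < c t)
    {i₀ : ι} (h₀ : φ i₀ = 0) {i j : ι} (hi : φ i ≠ 0) (hij : φ i < φ j) : c j < c i := by
  have hinflow := levelInflow_add_div_le φ (fun t => (hc0 t).le) hi hij
  have hFj : 0 < c j / levelOutdeg φ (φ j) :=
    div_pos (hc0 j) (levelOutdeg_pos φ h₀ hi j)
  have hci := pageRank_levelGraph_mul_eq hc i
  have hcj := pageRank_levelGraph_mul_eq hc j
  rw [mul_one_add, mul_div_left_comm] at hci hcj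
  nlinarith [mul_le_mul_of_nonneg_left hinflow hq.le, mul_pos hq hFj]

theorem pageRank_levelGraph_lt_of_level_zero_of_level_one (hq : 0 < q) (hc0 : ∀ t, 0 < c t)
    {i₂ : ι} (h₂ : 2 ≤ φ i₂) {i j : ι} (hi : φ i = 0) (hj : φ j = 1) : c j < c i := by
  have hd₁ : 0 < levelOutdeg φ 1 := hj ▸ levelOutdeg_pos φ hi (i₁ := j) (by omega) j
  have hfactor : q / levelOutdeg φ 0 < q / levelOutdeg φ 1 :=
    div_lt_div_of_pos_left hq hd₁ (levelOutdeg_one_lt_zero φ h₂)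
  have hci := pageRank_levelGraph_mul_eq hc i
  have hcj := pageRank_levelGraph_mul_eq hc j
  rw [hi] at hci
  rw [hj, levelInflow, levelSources_one, ← levelInflow] at hcj
  have hfactor₀ : 0 ≤ 1 + q / levelOutdeg φ 0 :=
    add_nonneg zero_le_one (div_nonneg hq.le (hi ▸ levelOutdeg_nonneg φ i))
  refine lt_of_mul_lt_mul_right ?_ hfactor₀
  linarith [mul_lt_mul_of_pos_left hfactor (hc0 j)]

theorem pageRank_levelGraph_lt_of_level_lt (hq : 0 < q) (hc0 : ∀ t, 0 < c t) {i₀ i₁ i₂ : ι}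
    (h₀ : φ i₀ = 0) (h₁ : φ i₁ = 1) (h₂ : 2 ≤ φ i₂) {i j : ι} (hij : φ i < φ j) : c j < c i := by
  by_cases hi : φ i = 0
  · by_cases hj : φ j = 1
    · exact pageRank_levelGraph_lt_of_level_zero_of_level_one hc hq hc0 h₂ hi hj
    · exact (pageRank_levelGraph_lt_of_level_lt_of_ne_zero hc hq hc0 h₀ (by omega) (by omega)).trans
        (pageRank_levelGraph_lt_of_level_zero_of_level_one hc hq hc0 h₂ hi h₁)
  · exact pageRank_levelGraph_lt_of_level_lt_of_ne_zero hc hq hc0 h₀ hi hij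

end PageRankEquation

end LevelGraph

/-- Inverse ranking problem for PageRank on directed graphs without loops: for every
`q ∈ (0,1)` and every ranking (possibly with ties) `φ` of `n` nodes onto `k ≥ 3` levels,
there is an unweighted loopless directed graph on `n` nodes, with every outdegree positive,
whose PageRank centrality with damping factor `q` realizes exactly the ranking `φ`. -/
theorem inverse_ranking_pageRank_directed (q : ℝ) (hq : q ∈ Set.Ioo (0:ℝ) 1)
    (n k : ℕ) (hk : 3 ≤ k)
    (φ : Fin n → Fin k) (hφ : Function.Surjective φ) :
    ∃ A : Matrix (Fin n) (Fin n) ℝ,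
      (∀ i j, A i j = 0 ∨ A i j = 1) ∧ (∀ i, A i i = 0) ∧
      (∀ i, 0 < ∑ j, A i j) ∧
      ∃ c : Fin n → ℝ, (∀ i, 0 < c i) ∧ (∑ i, c i = 1) ∧
        (∀ i, q * ∑ j, googleB A i j * c j = c i - (1 - q) / n) ∧
        (∀ i j : Fin n, (c j < c i ↔ φ i < φ j) ∧ (c i = c j ↔ φ i = φ j)) := by
  obtain ⟨hq0, hq1⟩ := hq
  set ψ : Fin n → ℕ := fun i => φ i
  have hlevel (a : ℕ) (ha : a < k) : ∃ i, ψ i = a := (hφ ⟨a, ha⟩).imp fun _ h => congrArg Fin.val h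
  obtain ⟨i₀, h₀⟩ := hlevel 0 (by omega)
  obtain ⟨i₁, h₁⟩ := hlevel 1 (by omega)
  obtain ⟨i₂, h₂⟩ := hlevel 2 (by omega)
  have hdeg (i : Fin n) : 0 < ∑ j, levelGraph ψ i j := by
    rw [sum_levelGraph_apply]
    exact levelOutdeg_pos ψ h₀ (i₁ := i₁) (by omega) i
  have : Nonempty (Fin n) := ⟨i₀⟩
  obtain ⟨c, hc0, hsum, hc⟩ := exists_pageRank (levelGraph ψ) (levelGraph_nonneg ψ) hdeg hq0.le hq1
  rw [Fintype.card_fin] at hc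
  refine ⟨levelGraph ψ, levelGraph_apply_eq_zero_or_one ψ, levelGraph_apply_self ψ, hdeg,
    c, hc0, hsum, fun i => by rw [hc i, mulVec, dotProduct]; ring, ?_⟩
  simpa only [ψ, Fin.lt_def, Fin.val_inj] using
    lt_iff_lt_and_eq_iff_eq_of_forall_lt (f := ψ)
      (fun i j => pageRank_levelGraph_lt_of_level_lt hc hq0 hc0 h₀ h₁ h₂.ge)
      (fun i j => pageRank_levelGraph_eq_of_level_eq hc hq0.le)
end
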